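/- Let H be an N×N real symmetric matrix and, for w ∈ ℂ⁺, write G(w) = (H − w·I)^{−1}. For every M > 0 there exists a constant C depending only on M such that: if z ∈ ℂ⁺ satisfies max_{1≤i≤N} |G_{ii}(z)| ≤ M, then for every z′ ∈ ℂ⁺ with |z′ − z| ≤ Im z / 2 and all indices 1 ≤ i, j ≤ N, one has |G_{ij}(z′) − G_{ij}(z)| ≤ C·|z′ − z| / Im z. -/

import Mathlib

open scoped Classical

noncomputable section

namespace Paper

/-- The degree of a vertex `v` in `G`. -/
def deg {V : Type} (G : SimpleGraph V) (v : V) : ℕ :=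
  Nat.card {u : V // G.Adj v u}

/-- `G` is a `d`-regular graph. -/
def IsRegular {V : Type} (d : ℕ) (G : SimpleGraph V) : Prop :=
  ∀ v, deg G v = d

/-- The excess of a finite graph: #edges - #vertices + #components. -/
def excess {V : Type} (G : SimpleGraph V) : ℤ :=
  (Nat.card G.edgeSet : ℤ) - (Nat.card V : ℤ) + (Nat.card G.ConnectedComponent : ℤ)

/-- The set of vertices at graph distance at most `R` from the set `S`. -/
def ball {V : Type} (G : SimpleGraph V) (S : Set V) (R : ℝ) : Set V :=
  {v | ∃ u ∈ S, ∃ w : G.Walk u v, (w.length : ℝ) ≤ R}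

/-- There is a path between `u` and `v` of length at most `R`. -/
def distLE {V : Type} (G : SimpleGraph V) (u v : V) (R : ℝ) : Prop :=
  ∃ w : G.Walk u v, (w.length : ℝ) ≤ R

/-- The normalized adjacency matrix `A/√(d-1)`, over `ℂ`. -/
def normAdj {V : Type} (d : ℕ) (G : SimpleGraph V) : Matrix V V ℂ :=
  Matrix.of fun i j => if G.Adj i j then ((Real.sqrt ((d : ℝ) - 1) : ℂ))⁻¹ else 0

/-- The normalized adjacency matrix `A/√(d-1)`, over `ℝ`. -/
def normAdjR {V : Type} (d : ℕ) (G : SimpleGraph V) : Matrix V V ℝ :=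
  Matrix.of fun i j => if G.Adj i j then (Real.sqrt ((d : ℝ) - 1))⁻¹ else 0

/-- The Green's function `(H - z)⁻¹`. -/
def green {V : Type} [Fintype V] [DecidableEq V] (d : ℕ) (G : SimpleGraph V) (z : ℂ) :
    Matrix V V ℂ :=
  (normAdj d G - z • (1 : Matrix V V ℂ))⁻¹

/-- The Stieltjes transform `m_N(z) = Tr G(z)/N`. -/
def mN {V : Type} [Fintype V] [DecidableEq V] (d : ℕ) (G : SimpleGraph V) (z : ℂ) : ℂ :=
  (Nat.card V : ℂ)⁻¹ * Matrix.trace (green d G z)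

/-- `m_sc(z)`: the root of `m² + zm + 1 = 0` with positive imaginary part. -/
def mSC (z : ℂ) : ℂ :=
  if h : ∃ m : ℂ, m ^ 2 + z * m + 1 = 0 ∧ 0 < m.im then h.choose else 0

/-- `m_d(z) = (-z - d m_sc(z)/(d-1))⁻¹`. -/
def mD (d : ℕ) (z : ℂ) : ℂ :=
  (-z - (d : ℂ) * mSC z / ((d : ℂ) - 1))⁻¹

/-- `κ(z) = min(|Re z - 2|, |Re z + 2|)`. -/
def kappa (z : ℂ) : ℝ :=
  min |z.re - 2| |z.re + 2|

/-- The matrix `H - z - Σ_v ((d - g v - deg v)/(d-1)) Δ e_vv` defining the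
extension of `(G, g)` with weight `Δ`. -/
def extMatrix {V : Type} [Fintype V] [DecidableEq V] (d : ℕ) (G : SimpleGraph V)
    (g : V → ℕ) (Δ z : ℂ) : Matrix V V ℂ :=
  normAdj d G - z • (1 : Matrix V V ℂ) -
    Matrix.diagonal fun v => (((d : ℂ) - (g v : ℂ) - (deg G v : ℂ)) / ((d : ℂ) - 1)) * Δ

/-- The Green's function of the extension of `(G, g)` with weight `Δ`. -/
def extGreen {V : Type} [Fintype V] [DecidableEq V] (d : ℕ) (G : SimpleGraph V)
    (g : V → ℕ) (Δ z : ℂ) : Matrix V V ℂ :=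
  (extMatrix d G g Δ z)⁻¹

/-- Entry `(i,j)` of the Green's function of the extension with weight `Δ` of the
ball `B_R(S, G)`, the ball carrying the deficit function inherited from the ambient
deficit function `g0`. -/
def ballGreen {V : Type} [Fintype V] [DecidableEq V] (d : ℕ) (G : SimpleGraph V)
    (g0 : V → ℕ) (S : Set V) (R : ℝ) (Δ z : ℂ) (i j : V) : ℂ :=
  if h : i ∈ ball G S R ∧ j ∈ ball G S R then
    extGreen d (G.induce (ball G S R)) (fun v => g0 v.val) Δ z ⟨i, h.1⟩ ⟨j, h.2⟩
  else 0

/-- The quantity `Q(G,z) = (Nd)⁻¹ Σ_{i ∼ j} G^{(j)}_{ii}(z)`. -/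
def Qfun {N : ℕ} (d : ℕ) (G : SimpleGraph (Fin N)) (z : ℂ) : ℂ :=
  ((N : ℂ) * (d : ℂ))⁻¹ *
    ∑ j : Fin N, ∑ i : Fin N,
      if h : G.Adj i j then
        green d (G.induce {k : Fin N | k ≠ j}) z ⟨i, h.ne⟩ ⟨i, h.ne⟩
      else 0

/-- Logarithm in base `d - 1`. -/
def logb (d : ℕ) (x : ℝ) : ℝ :=
  Real.log x / Real.log ((d : ℝ) - 1)

/-- The radius `ℜ = (c/4) log_{d-1} N`. -/
def RR (N d : ℕ) (c : ℝ) : ℝ :=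
  (c / 4) * logb d (N : ℝ)

/-- The radius `r = r₀ log_{d-1} N`. -/
def rr (N d : ℕ) (r₀ : ℝ) : ℝ :=
  r₀ * logb d (N : ℝ)

/-- The set `Ω̄(ω)` of radius-`ℜ` tree-like `d`-regular graphs. -/
def OmegaBar (N d : ℕ) (c : ℝ) (ω : ℕ) : Set (SimpleGraph (Fin N)) :=
  {G | IsRegular d G ∧
    (∀ v : Fin N, excess (G.induce (ball G {v} (RR N d c))) ≤ (ω : ℤ)) ∧
    (Nat.card {v : Fin N // ¬ (G.induce (ball G {v} (RR N d c))).IsAcyclic} : ℝ) ≤ (N : ℝ) ^ c}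

/-- The control parameter `ε₀(z)`. -/
def eps0 (N d : ℕ) (a r : ℝ) (z : ℂ) : ℝ :=
  Real.log (N : ℝ) ^ (8 * a) *
    (((d : ℝ) - 1) ^ (-r) + Real.sqrt ((mD d z).im / ((N : ℝ) * z.im)) +
      ((N : ℝ) * z.im) ^ (-(2 / 3 : ℝ)))

/-- The control parameter `ε(z)`. -/
def eps (N d : ℕ) (a r : ℝ) (z : ℂ) : ℝ :=
  if eps0 N d a r z ≤ (kappa z + z.im) / Real.log (N : ℝ) then eps0 N d a r z
  else Real.log (N : ℝ) ^ 4 * eps0 N d a r z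

/-- The set `Ω(z)` of spectrally regular graphs. -/
def OmegaSet (N d : ℕ) (c a r₀ : ℝ) (ω : ℕ) (z : ℂ) : Set (SimpleGraph (Fin N)) :=
  {G | G ∈ OmegaBar N d c ω ∧
    norm (Qfun d G z - mSC z) ≤
      eps N d a (rr N d r₀) z / Real.sqrt (kappa z + z.im + eps N d a (rr N d r₀) z) ∧
    ∀ i j : Fin N,
      norm (green d G z i j -
          ballGreen d G (fun v => d - deg G v) {i, j} (rr N d r₀) (Qfun d G z) z i j) ≤
        eps N d a (rr N d r₀) z}

/-- The set `Ω⁻(z)`. -/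
def OmegaMinus (N d : ℕ) (c a r₀ : ℝ) (ω : ℕ) (z : ℂ) : Set (SimpleGraph (Fin N)) :=
  {G | G ∈ OmegaBar N d c ω ∧
    norm (Qfun d G z - mSC z) ≤
      eps N d a (rr N d r₀) z / (2 * Real.sqrt (kappa z + z.im + eps N d a (rr N d r₀) z)) ∧
    ∀ i j : Fin N,
      norm (green d G z i j -
          ballGreen d G (fun v => d - deg G v) {i, j} (rr N d r₀) (Qfun d G z) z i j) ≤
        eps N d a (rr N d r₀) z / 2}

/-- `(T, o)` is a depth-`k` truncated `(d-1)`-ary tree with root `o`. -/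
def IsTruncAry (d k : ℕ) {V : Type} (T : SimpleGraph V) (o : V) : Prop :=
  T.IsTree ∧ (∀ v, T.dist o v ≤ k) ∧ deg T o = d - 1 ∧
    ∀ v, v ≠ o → T.dist o v < k → deg T v = d

/-- `(T, o)` is a depth-`k` truncated `d`-regular tree with root `o`. -/
def IsTruncReg (d k : ℕ) {V : Type} (T : SimpleGraph V) (o : V) : Prop :=
  T.IsTree ∧ (∀ v, T.dist o v ≤ k) ∧ ∀ v, T.dist o v < k → deg T v = d

/-- The Kesten–McKay density. -/
def rhoD (d : ℕ) (x : ℝ) : ℝ :=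
  (1 + 1 / ((d : ℝ) - 1) - x ^ 2 / (d : ℝ))⁻¹ * Real.sqrt (max (4 - x ^ 2) 0) / (2 * Real.pi)

/-- The diameter of a finite graph. -/
def gDiam {V : Type} [Fintype V] (T : SimpleGraph V) : ℕ :=
  Finset.univ.sup fun p : V × V => T.dist p.1 p.2

/-- The set of boundary edges of `s`, oriented from inside to outside. -/
def bndSet {V : Type} (G : SimpleGraph V) (s : Set V) : Set (V × V) :=
  {p | G.Adj p.1 p.2 ∧ p.1 ∈ s ∧ p.2 ∉ s}

/-- The vertex set of the connected component of `u` in the subgraph induced on `s`. -/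
def comp {V : Type} (G : SimpleGraph V) (s : Set V) (u : V) : Set V :=
  {w | ∃ (hu : u ∈ s) (hw : w ∈ s), (G.induce s).Reachable ⟨u, hu⟩ ⟨w, hw⟩}

/-- The number of neighbors of `v` inside `s`. -/
def degIn {V : Type} (G : SimpleGraph V) (s : Set V) (v : V) : ℕ :=
  Nat.card {w : V // w ∈ s ∧ G.Adj v w}

/-- The deterministic correction `δ_Q(z)`. -/
def deltaQ (N d l : ℕ) (z : ℂ) : ℂ :=
  (((d : ℂ) - 1) ^ (l + 1) - 1) * mSC z ^ (2 * l + 2) *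
    (1 + mSC z / (Real.sqrt ((d : ℝ) - 1) : ℂ)) ^ 2 *
    ((N : ℂ) * ((d : ℂ) / (Real.sqrt ((d : ℝ) - 1) : ℂ) - z))⁻¹

end Paper

/-
Diagonalize `H = U Λ U*`. Then `G(w)ᵢⱼ = Σₖ Uᵢₖ conj(Uⱼₖ) / (λₖ - w)`, and
`Im G(z)ᵢᵢ = Im z · Σₖ |Uᵢₖ|² / |λₖ - z|²`, so the diagonal bound controls these weights by `M / Im z`.
Since `|λ - z| ≥ Im z ≥ 2|z' - z|`, we have `|λ - z| ≤ 2|λ - z'|` and the weights at `z'` are at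
most four times those at `z`. Finally
`G(z')ᵢⱼ - G(z)ᵢⱼ = (z' - z) Σₖ Uᵢₖ conj(Uⱼₖ) / ((λₖ - z')(λₖ - z))`, and Cauchy–Schwarz bounds the
sum by the square root of the product of the two weights, giving `C = 2M`.
-/

theorem Complex.abs_im_le_norm_ofReal_sub (x : ℝ) (w : ℂ) : |w.im| ≤ ‖(x : ℂ) - w‖ := by
  simpa using Complex.abs_im_le_norm ((x : ℂ) - w)

theorem Complex.norm_ofReal_sub_pos (x : ℝ) {w : ℂ} (hw : w.im ≠ 0) : 0 < ‖(x : ℂ) - w‖ :=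
  (abs_pos.mpr hw).trans_le (Complex.abs_im_le_norm_ofReal_sub x w)

theorem Complex.norm_ofReal_sub_le_two_mul {z z' : ℂ} (hz : 0 < z.im) (h : ‖z' - z‖ ≤ z.im / 2)
    (x : ℝ) : ‖(x : ℂ) - z‖ ≤ 2 * ‖(x : ℂ) - z'‖ := by
  have hfar : z.im ≤ ‖(x : ℂ) - z‖ := by
    simpa [abs_of_pos hz] using Complex.abs_im_le_norm_ofReal_sub x z
  have htri : ‖(x : ℂ) - z‖ ≤ ‖(x : ℂ) - z'‖ + ‖z' - z‖ := norm_sub_le_norm_sub_add_norm_sub _ _ _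
  linarith

namespace Matrix.IsHermitian

open Unitary

variable {n : Type*} [Fintype n] [DecidableEq n] {A : Matrix n n ℂ} (hA : A.IsHermitian)

def resolventWeight (i : n) (w : ℂ) : ℝ :=
  ∑ k, ‖(hA.eigenvectorUnitary : Matrix n n ℂ) i k‖ ^ 2 / ‖(hA.eigenvalues k : ℂ) - w‖ ^ 2

theorem resolventWeight_nonneg (i : n) (w : ℂ) : 0 ≤ hA.resolventWeight i w := by
  unfold resolventWeight; positivity

theorem sub_smul_one_eq_conj (w : ℂ) :
    A - w • 1 = conjStarAlgAut ℂ _ hA.eigenvectorUnitary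
      (diagonal fun k => (hA.eigenvalues k : ℂ) - w) := by
  have hdiag : (diagonal fun k => (hA.eigenvalues k : ℂ) - w) =
      diagonal (RCLike.ofReal ∘ hA.eigenvalues) - w • 1 := by
    rw [smul_one_eq_diagonal, diagonal_sub]
    rfl
  conv_lhs => rw [hA.spectral_theorem]
  rw [hdiag, map_sub, map_smul, map_one]

theorem sub_smul_one_inv_eq_conj {w : ℂ} (hw : w.im ≠ 0) :
    (A - w • 1)⁻¹ = conjStarAlgAut ℂ _ hA.eigenvectorUnitary
      (diagonal fun k => ((hA.eigenvalues k : ℂ) - w)⁻¹) := by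
  have hne (k : n) : (hA.eigenvalues k : ℂ) - w ≠ 0 :=
    norm_pos_iff.mp (Complex.norm_ofReal_sub_pos _ hw)
  refine inv_eq_right_inv ?_
  rw [hA.sub_smul_one_eq_conj, ← map_mul, diagonal_mul_diagonal]
  simp [hne]

theorem sub_smul_one_inv_apply {w : ℂ} (hw : w.im ≠ 0) (i j : n) :
    (A - w • 1)⁻¹ i j = ∑ k, (hA.eigenvectorUnitary : Matrix n n ℂ) i k *
      star ((hA.eigenvectorUnitary : Matrix n n ℂ) j k) * ((hA.eigenvalues k : ℂ) - w)⁻¹ := by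
  rw [hA.sub_smul_one_inv_eq_conj hw, conjStarAlgAut_apply, mul_apply]
  simp [mul_diagonal, mul_right_comm]

theorem im_sub_smul_one_inv_apply_self {w : ℂ} (hw : w.im ≠ 0) (i : n) :
    ((A - w • 1)⁻¹ i i).im = w.im * hA.resolventWeight i w := by
  rw [hA.sub_smul_one_inv_apply hw, Complex.im_sum, resolventWeight, Finset.mul_sum]
  refine Finset.sum_congr rfl fun k _ => ?_
  rw [Complex.star_def, Complex.mul_conj, Complex.im_ofReal_mul, Complex.inv_im,
    Complex.normSq_eq_norm_sq, Complex.normSq_eq_norm_sq]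
  simp only [Complex.sub_im, Complex.ofReal_im, zero_sub, neg_neg]
  ring

theorem resolventWeight_le_four_mul {z z' : ℂ} (hz : 0 < z.im) (h : ‖z' - z‖ ≤ z.im / 2) (i : n) :
    hA.resolventWeight i z' ≤ 4 * hA.resolventWeight i z := by
  rw [resolventWeight, resolventWeight, Finset.mul_sum]
  refine Finset.sum_le_sum fun k _ => ?_
  have hpos := Complex.norm_ofReal_sub_pos (hA.eigenvalues k) hz.ne'
  have hle := Complex.norm_ofReal_sub_le_two_mul hz h (hA.eigenvalues k)
  calc _ ≤ ‖(hA.eigenvectorUnitary : Matrix n n ℂ) i k‖ ^ 2 /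
        (‖(hA.eigenvalues k : ℂ) - z‖ / 2) ^ 2 := by gcongr; linarith
    _ = _ := by ring

theorem norm_sub_smul_one_inv_apply_sub_le {z z' : ℂ} (hz : z.im ≠ 0) (hz' : z'.im ≠ 0)
    (i j : n) :
    ‖(A - z' • 1)⁻¹ i j - (A - z • 1)⁻¹ i j‖ ≤
      ‖z' - z‖ * √(hA.resolventWeight i z' * hA.resolventWeight j z) := by
  set U : Matrix n n ℂ := (hA.eigenvectorUnitary : Matrix n n ℂ)
  set a : n → ℝ := fun k => ‖U i k‖ / ‖(hA.eigenvalues k : ℂ) - z'‖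
  set b : n → ℝ := fun k => ‖U j k‖ / ‖(hA.eigenvalues k : ℂ) - z‖
  have hterm (k : n) :
      ‖U i k * star (U j k) * ((hA.eigenvalues k : ℂ) - z')⁻¹ -
        U i k * star (U j k) * ((hA.eigenvalues k : ℂ) - z)⁻¹‖ = ‖z' - z‖ * (a k * b k) := by
    have hne := norm_pos_iff.mp (Complex.norm_ofReal_sub_pos (hA.eigenvalues k) hz)
    have hne' := norm_pos_iff.mp (Complex.norm_ofReal_sub_pos (hA.eigenvalues k) hz')
    rw [← mul_sub, inv_sub_inv' hne' hne, sub_sub_sub_cancel_left]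
    simp only [a, b, norm_mul, norm_inv, norm_star]
    ring
  have hweight : hA.resolventWeight i z' * hA.resolventWeight j z =
      (∑ k, a k ^ 2) * ∑ k, b k ^ 2 := by
    simp only [resolventWeight, a, b, div_pow, U]
  rw [hA.sub_smul_one_inv_apply hz', hA.sub_smul_one_inv_apply hz, ← Finset.sum_sub_distrib,
    hweight, Real.sqrt_mul (by positivity)]
  calc _ ≤ ∑ k, ‖z' - z‖ * (a k * b k) :=
        (norm_sum_le _ _).trans_eq (Finset.sum_congr rfl fun k _ => hterm k)
    _ = ‖z' - z‖ * ∑ k, a k * b k := by rw [Finset.mul_sum]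
    _ ≤ _ := by
      gcongr
      exact Real.sum_mul_le_sqrt_mul_sqrt _ _ _

end Matrix.IsHermitian

namespace Paper

theorem statement15_general (M : ℝ) :
    ∃ C : ℝ,
      ∀ (N : ℕ) (H : Matrix (Fin N) (Fin N) ℝ), H.IsSymm →
        ∀ z : ℂ, 0 < z.im →
          (∀ i : Fin N,
            norm
                (((H.map (Complex.ofReal) - z • (1 : Matrix (Fin N) (Fin N) ℂ))⁻¹) i i) ≤ M) →
          ∀ z' : ℂ, 0 < z'.im → norm (z' - z) ≤ z.im / 2 →
            ∀ i j : Fin N,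
              norm
                  (((H.map (Complex.ofReal) - z' • (1 : Matrix (Fin N) (Fin N) ℂ))⁻¹) i j -
                    ((H.map (Complex.ofReal) - z • (1 : Matrix (Fin N) (Fin N) ℂ))⁻¹) i j) ≤
                C * norm (z' - z) / z.im := by
  refine ⟨2 * M, fun N H hH z hz hdiag z' hz' hzz' i j => ?_⟩
  have hA : (H.map Complex.ofReal).IsHermitian :=
    (Matrix.isHermitian_iff_isSymm.mpr hH).map _ fun x => by simp
  have hweight (k : Fin N) : hA.resolventWeight k z ≤ M / z.im := by
    rw [le_div_iff₀ hz, mul_comm, ← hA.im_sub_smul_one_inv_apply_self hz.ne']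
    exact (Complex.im_le_norm _).trans (hdiag k)
  have hweight' : hA.resolventWeight i z' ≤ 4 * (M / z.im) :=
    (hA.resolventWeight_le_four_mul hz hzz' i).trans (by gcongr; exact hweight i)
  have hM : 0 ≤ M / z.im := (hA.resolventWeight_nonneg i z).trans (hweight i)
  calc _ ≤ ‖z' - z‖ * √(hA.resolventWeight i z' * hA.resolventWeight j z) :=
        hA.norm_sub_smul_one_inv_apply_sub_le hz.ne' hz'.ne' i j
    _ ≤ ‖z' - z‖ * √((2 * (M / z.im)) ^ 2) := by
        gcongr
        exact (mul_le_mul hweight' (hweight j) (hA.resolventWeight_nonneg j z)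
          (by positivity)).trans_eq (by ring)
    _ = 2 * M * ‖z' - z‖ / z.im := by
        rw [Real.sqrt_sq (by positivity)]
        ring

/-- Lipschitz continuity in `z` of the Green's function of a real
symmetric matrix, given a bound on the diagonal entries. -/
theorem statement15 (M : ℝ) (hM : 0 < M) :
    ∃ C : ℝ,
      ∀ (N : ℕ) (H : Matrix (Fin N) (Fin N) ℝ), H.IsSymm →
        ∀ z : ℂ, 0 < z.im →
          (∀ i : Fin N,
            norm
                (((H.map (Complex.ofReal) - z • (1 : Matrix (Fin N) (Fin N) ℂ))⁻¹) i i) ≤ M) →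
          ∀ z' : ℂ, 0 < z'.im → norm (z' - z) ≤ z.im / 2 →
            ∀ i j : Fin N,
              norm
                  (((H.map (Complex.ofReal) - z' • (1 : Matrix (Fin N) (Fin N) ℂ))⁻¹) i j -
                    ((H.map (Complex.ofReal) - z • (1 : Matrix (Fin N) (Fin N) ℂ))⁻¹) i j) ≤
                C * norm (z' - z) / z.im :=
  statement15_general M

end Paper
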